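/- The map λ ↦ (1/N)Σ_i ‖ŵ_i − C*(λ) r̂_i‖² (the data-fit error of the regularized solution) is non-decreasing on (0,∞). -/
import Mathlib


open Finset Matrix

/-- The data-fit error of the regularized solution is non-decreasing in `λ` on `(0, ∞)`. -/
theorem stmt12 {m n N : ℕ} (hN : 0 < N)
    (wc : Fin N → Fin m → ℝ) (rc : Fin N → Fin n → ℝ)
    (Cw : Matrix (Fin m) (Fin n) ℝ)
    (Cstar : ℝ → Matrix (Fin m) (Fin n) ℝ)
    (hCstar : ∀ lam : ℝ, 0 < lam → ∀ C : Matrix (Fin m) (Fin n) ℝ,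
      (N : ℝ)⁻¹ * ∑ i, ∑ k, (wc i k - (Cstar lam).mulVec (rc i) k) ^ 2 +
        lam * ∑ k, ∑ j, (Cstar lam k j - Cw k j) ^ 2 ≤
      (N : ℝ)⁻¹ * ∑ i, ∑ k, (wc i k - C.mulVec (rc i) k) ^ 2 +
        lam * ∑ k, ∑ j, (C k j - Cw k j) ^ 2) :
    ∀ lam₁ lam₂ : ℝ, 0 < lam₁ → lam₁ ≤ lam₂ →
      (N : ℝ)⁻¹ * ∑ i, ∑ k, (wc i k - (Cstar lam₁).mulVec (rc i) k) ^ 2 ≤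
      (N : ℝ)⁻¹ * ∑ i, ∑ k, (wc i k - (Cstar lam₂).mulVec (rc i) k) ^ 2 := by
  intro lam₁ lam₂ h1 h12
  rcases lt_or_eq_of_le h12 with hlt | heq
  · have ha := hCstar lam₁ h1 (Cstar lam₂)
    have hb := hCstar lam₂ (h1.trans_le h12) (Cstar lam₁)
    nlinarith
  · subst heq
    exact le_refl _
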